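/- Let τ_K, τ_M > 1 with τ_K⁻¹+τ_M⁻¹ < 1, λ± := (√(τ_M⁻¹(1−τ_K⁻¹)) ± √(τ_K⁻¹(1−τ_M⁻¹)))², and 𝒢(z) := [τ_M⁻¹+τ_K⁻¹−z+√((z−λ₋)(z−λ₊))]/(2z(z−1)) + 1/(zτ_K) (positive square root for z > λ₊). Define Q_x(z) := −[1 − 2τ_K⁻¹ − (1/z)(τ_M⁻¹−τ_K⁻¹) − (1−z)𝒢(z)]/[1 − τ_M⁻¹ − zτ_K⁻¹ − z(1−z)𝒢(z)] and Q_y(z) := −[1 − τ_K⁻¹ − τ_M⁻¹ − (1−z)𝒢(z)]/[1 − τ_M⁻¹ − zτ_K⁻¹ − z(1−z)𝒢(z)]. Then for every ρ² with 1/√((τ_M−1)(τ_K−1)) < ρ² ≤ 1, evaluating at z_ρ := ((τ_K−1)ρ²+1)((τ_M−1)ρ²+1)/(ρ²τ_Kτ_M) gives Q_x(z_ρ) = −ρ²τ_M/(ρ²(τ_M−1) + 1) and Q_y(z_ρ) = −ρ²τ_K/(ρ²(τ_K−1) + 1). -/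

import Mathlib

open MeasureTheory ProbabilityTheory Filter Matrix

noncomputable section

/-- Euclidean dot product on `Fin n → ℝ`. -/
def dotR {n : ℕ} (a b : Fin n → ℝ) : ℝ := ∑ i, a i * b i

/-- The (cross-)covariance matrix `E[X Yᵀ]` of two mean-zero random vectors. -/
def covMat {Ω : Type} [MeasurableSpace Ω] (μ : Measure Ω) {n m : ℕ}
    (X : Ω → Fin n → ℝ) (Y : Ω → Fin m → ℝ) : Matrix (Fin n) (Fin m) ℝ :=
  Matrix.of fun i j => ∫ ω, X ω i * Y ω j ∂μ

/-- A random vector is centered (jointly) Gaussian if every linear functional of it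
is a centered one-dimensional Gaussian. -/
def IsCenteredGaussianVec {Ω : Type} [MeasurableSpace Ω] (μ : Measure Ω)
    {n : ℕ} (X : Ω → Fin n → ℝ) : Prop :=
  ∀ l : Fin n → ℝ, ∃ v : NNReal,
    Measure.map (fun ω => dotR l (X ω)) μ = gaussianReal 0 v

/-- Fourth-moment Gaussian family of random variables: mean zero and the Wick rule
for all fourth joint moments. -/
def FourthMomentGaussian {Ω : Type} [MeasurableSpace Ω] (μ : Measure Ω)
    {ι : Type} (X : ι → Ω → ℝ) : Prop :=
  (∀ i, ∫ ω, X i ω ∂μ = 0) ∧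
  ∀ i j k l, ∫ ω, X i ω * X j ω * X k ω * X l ω ∂μ =
    (∫ ω, X i ω * X j ω ∂μ) * (∫ ω, X k ω * X l ω ∂μ)
    + (∫ ω, X i ω * X k ω ∂μ) * (∫ ω, X j ω * X l ω ∂μ)
    + (∫ ω, X i ω * X l ω ∂μ) * (∫ ω, X j ω * X k ω ∂μ)

/-- Convergence in probability to a constant, along a sequence of probability spaces. -/
def TendstoInProb {Ω : ℕ → Type} [∀ S, MeasurableSpace (Ω S)]
    (μ : ∀ S, Measure (Ω S)) (X : ∀ S, Ω S → ℝ) (c : ℝ) : Prop :=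
  ∀ ε : ℝ, 0 < ε →
    Tendsto (fun S => μ S {ω | ε ≤ |X S ω - c|}) atTop (nhds 0)

/-- `lam` is an antitone enumeration (with multiplicity) of the eigenvalues of `T`. -/
def EigenvaluesOf {n : ℕ} (T : Matrix (Fin n) (Fin n) ℝ) (lam : Fin n → ℝ) : Prop :=
  Antitone lam ∧ T.charpoly = ∏ i, (Polynomial.X - Polynomial.C (lam i))

/-- The `K × K` matrix whose eigenvalues are the squared sample canonical
correlations between the rows of `U` and of `V`. -/
def ccaMatrix {K M S : ℕ} (U : Matrix (Fin K) (Fin S) ℝ) (V : Matrix (Fin M) (Fin S) ℝ) :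
    Matrix (Fin K) (Fin K) ℝ :=
  (U * Uᵀ)⁻¹ * (U * Vᵀ) * (V * Vᵀ)⁻¹ * (V * Uᵀ)

/-- The companion `M × M` matrix. -/
def ccaMatrixV {K M S : ℕ} (U : Matrix (Fin K) (Fin S) ℝ) (V : Matrix (Fin M) (Fin S) ℝ) :
    Matrix (Fin M) (Fin M) ℝ :=
  (V * Vᵀ)⁻¹ * (V * Uᵀ) * (U * Uᵀ)⁻¹ * (U * Vᵀ)

/-- `λ₊` resp. `λ₋`. -/
def lambdaPlus (τK τM : ℝ) : ℝ :=
  (Real.sqrt (τM⁻¹ * (1 - τK⁻¹)) + Real.sqrt (τK⁻¹ * (1 - τM⁻¹)))^2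

def lambdaMinus (τK τM : ℝ) : ℝ :=
  (Real.sqrt (τM⁻¹ * (1 - τK⁻¹)) - Real.sqrt (τK⁻¹ * (1 - τM⁻¹)))^2

/-- the detection threshold `ρ_c²`. -/
def rhoc2 (τK τM : ℝ) : ℝ := 1 / Real.sqrt ((τM - 1) * (τK - 1))

/-- the outlier location `z_ρ` (as a function of `ρ²`). -/
def zrho (τK τM ρ2 : ℝ) : ℝ :=
  ((τK - 1) * ρ2 + 1) * ((τM - 1) * ρ2 + 1) / (ρ2 * τK * τM)

/-- limit of `sin² θ_x`. -/
def sinx2 (τK τM ρ2 : ℝ) : ℝ :=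
  (1 - ρ2) * (τK - 1) / ((τM - 1) * (τK - 1) * ρ2 - 1) *
    (((τM - 1) * ρ2 + 1) / ((τK - 1) * ρ2 + 1))

/-- limit of `sin² θ_y`. -/
def siny2 (τK τM ρ2 : ℝ) : ℝ :=
  (1 - ρ2) * (τM - 1) / ((τM - 1) * (τK - 1) * ρ2 - 1) *
    (((τK - 1) * ρ2 + 1) / ((τM - 1) * ρ2 + 1))


/-- The modified Stieltjes transform of the Wachter distribution (explicit formula,
positive branch of the square root). -/
def calG (τK τM z : ℝ) : ℝ :=
  (τM⁻¹ + τK⁻¹ - z +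
      Real.sqrt ((z - lambdaMinus τK τM) * (z - lambdaPlus τK τM))) / (2 * z * (z - 1))
    + 1 / (z * τK)

/-- The limiting function `Q_x`. -/
def Qx (τK τM z : ℝ) : ℝ :=
  -((1 - 2 * τK⁻¹ - (1 / z) * (τM⁻¹ - τK⁻¹) - (1 - z) * calG τK τM z) /
    (1 - τM⁻¹ - z * τK⁻¹ - z * (1 - z) * calG τK τM z))

/-- The limiting function `Q_y`. -/
def Qy (τK τM z : ℝ) : ℝ :=
  -((1 - τK⁻¹ - τM⁻¹ - (1 - z) * calG τK τM z) /
    (1 - τM⁻¹ - z * τK⁻¹ - z * (1 - z) * calG τK τM z))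


/-! At `z = z_ρ` the discriminant `(z - λ₋)(z - λ₊)` is the perfect square of
`((τK - 1)(τM - 1)ρ⁴ - 1) / (ρ² τK τM)`, whose base is positive exactly when `ρ² > ρ_c²`;
so on that range `𝒢(z_ρ)` is a rational function of `ρ²`. Both `Q_x` and `Q_y` see `𝒢` only
through `(1 - z) 𝒢(z)`, in which the pole of `𝒢` at `z = 1` cancels, and after substituting its
closed form at `z_ρ` the two claims are identities between rational functions. -/

section WachterAtOutlier

variable {τK τM : ℝ}

lemma sub_lambdaMinus_mul_sub_lambdaPlus (hK : 1 ≤ τK) (hM : 1 ≤ τM) (z : ℝ) :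
    (z - lambdaMinus τK τM) * (z - lambdaPlus τK τM) =
      z ^ 2 - 2 * (τM⁻¹ * (1 - τK⁻¹) + τK⁻¹ * (1 - τM⁻¹)) * z + (τM⁻¹ - τK⁻¹) ^ 2 := by
  have hx := Real.sq_sqrt (show 0 ≤ τM⁻¹ * (1 - τK⁻¹) from
    mul_nonneg (by positivity) (sub_nonneg.2 (inv_le_one_of_one_le₀ hK)))
  have hy := Real.sq_sqrt (show 0 ≤ τK⁻¹ * (1 - τM⁻¹) from
    mul_nonneg (by positivity) (sub_nonneg.2 (inv_le_one_of_one_le₀ hM)))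
  unfold lambdaMinus lambdaPlus
  set x := Real.sqrt (τM⁻¹ * (1 - τK⁻¹))
  set y := Real.sqrt (τK⁻¹ * (1 - τM⁻¹))
  linear_combination (x ^ 2 - y ^ 2 + τM⁻¹ * (1 - τK⁻¹) - τK⁻¹ * (1 - τM⁻¹) - 2 * z) * hx
    - (x ^ 2 - y ^ 2 + τM⁻¹ * (1 - τK⁻¹) - τK⁻¹ * (1 - τM⁻¹) + 2 * z) * hy

lemma sub_lambdaMinus_mul_sub_lambdaPlus_zrho (hK : 1 ≤ τK) (hM : 1 ≤ τM) {ρ2 : ℝ}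
    (hρ : ρ2 ≠ 0) :
    (zrho τK τM ρ2 - lambdaMinus τK τM) * (zrho τK τM ρ2 - lambdaPlus τK τM) =
      (((τM - 1) * (τK - 1) * ρ2 ^ 2 - 1) / (ρ2 * τK * τM)) ^ 2 := by
  have : τK ≠ 0 := by positivity
  have : τM ≠ 0 := by positivity
  rw [sub_lambdaMinus_mul_sub_lambdaPlus hK hM, zrho]
  field_simp
  ring

lemma rhoc2_pos (hK : 1 < τK) (hM : 1 < τM) : 0 < rhoc2 τK τM :=
  one_div_pos.2 (Real.sqrt_pos.2 (mul_pos (by linarith) (by linarith)))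

lemma one_lt_mul_sq_of_rhoc2_lt (hK : 1 < τK) (hM : 1 < τM) {ρ2 : ℝ}
    (h : rhoc2 τK τM < ρ2) : 1 < (τM - 1) * (τK - 1) * ρ2 ^ 2 := by
  have hW : 0 < (τM - 1) * (τK - 1) := mul_pos (by linarith) (by linarith)
  rw [rhoc2, div_lt_iff₀ (Real.sqrt_pos.2 hW)] at h
  calc (1 : ℝ) < (ρ2 * Real.sqrt ((τM - 1) * (τK - 1))) ^ 2 := by nlinarith
    _ = (τM - 1) * (τK - 1) * ρ2 ^ 2 := by rw [mul_pow, Real.sq_sqrt hW.le]; ring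

lemma one_sub_zrho (hK : τK ≠ 0) (hM : τM ≠ 0) {ρ2 : ℝ} (hρ : ρ2 ≠ 0) :
    1 - zrho τK τM ρ2 = ((τK - 1) * (τM - 1) * ρ2 - 1) * (1 - ρ2) / (ρ2 * τK * τM) := by
  rw [zrho]
  field_simp
  ring

lemma one_sub_mul_calG {z : ℝ} (hK : τK ≠ 0) (hz0 : z ≠ 0) (hz1 : z ≠ 1) :
    (1 - z) * calG τK τM z =
      (1 - z) / (z * τK) -
        (τM⁻¹ + τK⁻¹ - z + Real.sqrt ((z - lambdaMinus τK τM) * (z - lambdaPlus τK τM))) /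
          (2 * z) := by
  have : z - 1 ≠ 0 := sub_ne_zero.2 hz1
  rw [calG]
  field_simp
  ring

/-- At `ρ2 = 1` we have `z_ρ = 1`, where `calG` divides by zero, but both sides vanish. -/
lemma one_sub_zrho_mul_calG (hK : 1 < τK) (hM : 1 < τM) {ρ2 : ℝ}
    (hlo : rhoc2 τK τM < ρ2) (hhi : ρ2 ≤ 1) :
    (1 - zrho τK τM ρ2) * calG τK τM (zrho τK τM ρ2) =
      (τK - 1) * (1 - ρ2) / (τK * ((τK - 1) * ρ2 + 1)) := by
  have hρ : 0 < ρ2 := (rhoc2_pos hK hM).trans hlo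
  have hW := one_lt_mul_sq_of_rhoc2_lt hK hM hlo
  have hK0 : τK ≠ 0 := by positivity
  have hM0 : τM ≠ 0 := by positivity
  rcases hhi.eq_or_lt with rfl | hlt
  · simp [zrho, hK0, hM0]
  have hE : 0 < (τK - 1) * (τM - 1) * ρ2 - 1 := by nlinarith
  have hz0 : zrho τK τM ρ2 ≠ 0 := by rw [zrho]; positivity
  have hz1 : zrho τK τM ρ2 ≠ 1 := by
    have : 0 < 1 - ρ2 := by linarith
    rw [← sub_ne_zero, ← neg_ne_zero, neg_sub, one_sub_zrho hK0 hM0 hρ.ne']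
    positivity
  have hdisc : 0 ≤ (τM - 1) * (τK - 1) * ρ2 ^ 2 - 1 := by linarith
  rw [one_sub_mul_calG hK0 hz0 hz1, sub_lambdaMinus_mul_sub_lambdaPlus_zrho hK.le hM.le hρ.ne',
    Real.sqrt_sq (by positivity), zrho]
  have hp : 0 < (τK - 1) * ρ2 + 1 := by nlinarith
  have hq : 0 < (τM - 1) * ρ2 + 1 := by nlinarith
  -- hide the linear factors, which `field_simp` would otherwise expand beyond recognition
  generalize hp_def : (τK - 1) * ρ2 + 1 = p at hp ⊢
  generalize hq_def : (τM - 1) * ρ2 + 1 = q at hq ⊢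
  field_simp
  subst hp_def hq_def
  ring

end WachterAtOutlier

theorem Qx_Qy_at_zrho_general
    (τK τM : ℝ) (hτK : 1 < τK) (hτM : 1 < τM) :
    ∀ ρ2 : ℝ, rhoc2 τK τM < ρ2 → ρ2 ≤ 1 →
      Qx τK τM (zrho τK τM ρ2) = -(ρ2 * τM) / (ρ2 * (τM - 1) + 1) ∧
      Qy τK τM (zrho τK τM ρ2) = -(ρ2 * τK) / (ρ2 * (τK - 1) + 1) := by
  intro ρ2 hlo hhi
  have hρ : 0 < ρ2 := (rhoc2_pos hτK hτM).trans hlo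
  have hW := one_lt_mul_sq_of_rhoc2_lt hτK hτM hlo
  have hE : 0 < (τK - 1) * (τM - 1) * ρ2 - 1 := by nlinarith
  have hp : 0 < (τK - 1) * ρ2 + 1 := by nlinarith
  have hq : 0 < (τM - 1) * ρ2 + 1 := by nlinarith
  have hH := one_sub_zrho_mul_calG hτK hτM hlo hhi
  have hD : 1 - τM⁻¹ - zrho τK τM ρ2 * τK⁻¹ -
      zrho τK τM ρ2 * (1 - zrho τK τM ρ2) * calG τK τM (zrho τK τM ρ2) =
        ((τK - 1) * (τM - 1) * ρ2 - 1) / (ρ2 * τK * τM) := by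
    rw [mul_assoc, hH, zrho]
    field_simp
    ring
  rw [Qx, Qy, hD, hH, zrho, mul_comm ρ2 (τK - 1), mul_comm ρ2 (τM - 1)]
  generalize hp_def : (τK - 1) * ρ2 + 1 = p at hp ⊢
  generalize hq_def : (τM - 1) * ρ2 + 1 = q at hq ⊢
  generalize hE_def : (τK - 1) * (τM - 1) * ρ2 - 1 = E at hE ⊢
  constructor
  all_goals
    field_simp
    subst hp_def hq_def hE_def
    ring

/-- Lemma B.3 of the paper: evaluation of `Q_x` and `Q_y` at `z_ρ`. -/
theorem Qx_Qy_at_zrho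
    (τK τM : ℝ) (hτK : 1 < τK) (hτM : 1 < τM) (hτ : τK⁻¹ + τM⁻¹ < 1) :
    ∀ ρ2 : ℝ, rhoc2 τK τM < ρ2 → ρ2 ≤ 1 →
      Qx τK τM (zrho τK τM ρ2) = -(ρ2 * τM) / (ρ2 * (τM - 1) + 1) ∧
      Qy τK τM (zrho τK τM ρ2) = -(ρ2 * τK) / (ρ2 * (τK - 1) + 1) :=
  Qx_Qy_at_zrho_general τK τM hτK hτM
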